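/- arXiv:1302.0217 — 2 statements merged into one kernel-verified Lean document; each statement's English description precedes it below -/
import Mathlib

section
/- Let g be a finite-dimensional simple real Lie algebra and let ν : g → g be a Lie algebra automorphism with ν^k = id for some integer k ≥ 2 and ν ≠ id; set h := ker(id − ν) and m := range(id − ν). Then the subspace c := m + span⁅m, m⁆ is a nonzero Lie ideal of g, hence c = g. Consequently the pair (g, ν) is prime: every Lie ideal of g contained in h is zero, and the projection of span⁅m, m⁆ onto h along m is all of h (i.e. [m, m]_h = h). -/
/-!
Since `ν` has finite order, averaging over its powers splits `g = h + m`. As `ν` preserves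
brackets, `⁅h, m⁆ ⊆ m`, so `⁅g, m⁆ ⊆ m + [m, m]`; the Jacobi identity then gives
`⁅g, [m, m]⁆ ⊆ m + [m, m]`. Thus `m + [m, m]` is an ideal, nonzero because `ν ≠ id`, hence all
of `g` by simplicity. The same simplicity shows that an ideal inside `h` is zero: otherwise
`h = g` and `ν = id`.
-/

open Finset

theorem Module.End.ker_one_sub_sup_range_one_sub_eq_top_of_pow_eq_one
    {K V : Type*} [Field K] [AddCommGroup V] [Module K V] {f : Module.End K V} {k : ℕ}
    (hk : (k : K) ≠ 0) (hf : f ^ k = 1) :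
    LinearMap.ker (1 - f) ⊔ LinearMap.range (1 - f) = ⊤ := by
  set P : Module.End K V := (k : K)⁻¹ • ∑ i ∈ range k, f ^ i
  have hP : (1 - f) * P = 0 := by
    rw [mul_smul_comm, mul_neg_geom_sum, hf, sub_self, smul_zero]
  have hQ : 1 - P = (1 - f) * ((k : K)⁻¹ • ∑ i ∈ range k, ∑ j ∈ range i, f ^ j) := by
    rw [mul_smul_comm, mul_sum]
    simp only [mul_neg_geom_sum, sum_sub_distrib, sum_const, card_range, smul_sub, P,
      ← Nat.cast_smul_eq_nsmul K, smul_smul, inv_mul_cancel₀ hk, one_smul]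
  refine eq_top_iff.2 fun x _ => Submodule.mem_sup.2 ⟨P x, ?_, (1 - P) x, ?_, ?_⟩
  · rw [LinearMap.mem_ker, ← Module.End.mul_apply, hP, LinearMap.zero_apply]
  · rw [hQ]
    exact LinearMap.mem_range_self _ _
  · simp

namespace Submodule

variable {R L : Type*} [CommRing R] [LieRing L] [LieAlgebra R L]

def bracketSpan (m : Submodule R L) : Submodule R L :=
  span R {z : L | ∃ a ∈ m, ∃ b ∈ m, ⁅a, b⁆ = z}

theorem lie_mem_bracketSpan {m : Submodule R L} {a b : L} (ha : a ∈ m) (hb : b ∈ m) :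
    ⁅a, b⁆ ∈ m.bracketSpan :=
  subset_span ⟨a, ha, b, hb, rfl⟩

theorem lie_mem_sup_bracketSpan {m : Submodule R L}
    (hm : ∀ (x : L), ∀ a ∈ m, ⁅x, a⁆ ∈ m ⊔ m.bracketSpan) (x : L) {y : L}
    (hy : y ∈ m ⊔ m.bracketSpan) : ⁅x, y⁆ ∈ m ⊔ m.bracketSpan := by
  have hbracket : ∀ z ∈ m.bracketSpan, ⁅x, z⁆ ∈ m ⊔ m.bracketSpan := fun z hz => by
    induction hz using span_induction with
    | mem w hw =>
      obtain ⟨a, ha, b, hb, rfl⟩ := hw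
      rw [leibniz_lie, ← lie_skew a ⁅x, b⁆]
      exact add_mem (hm _ _ hb) (neg_mem (hm _ _ ha))
    | zero => simp
    | add u v _ _ hu hv => rw [lie_add]; exact add_mem hu hv
    | smul t u _ hu => rw [lie_smul]; exact smul_mem _ _ hu
  obtain ⟨a, ha, z, hz, rfl⟩ := mem_sup.1 hy
  rw [lie_add]
  exact add_mem (hm x a ha) (hbracket z hz)

def supBracketSpanLieIdeal (m : Submodule R L)
    (hm : ∀ (x : L), ∀ a ∈ m, ⁅x, a⁆ ∈ m ⊔ m.bracketSpan) : LieIdeal R L where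
  toSubmodule := m ⊔ m.bracketSpan
  lie_mem := lie_mem_sup_bracketSpan hm _

end Submodule

section FixedPoints

variable {R L : Type*} [CommRing R] [LieRing L] [LieAlgebra R L] {ν : Module.End R L}

theorem lie_mem_range_one_sub_of_apply_eq_self (hbr : ∀ x y : L, ν ⁅x, y⁆ = ⁅ν x, ν y⁆)
    {h a : L} (hh : ν h = h) (ha : a ∈ LinearMap.range (1 - ν)) :
    ⁅h, a⁆ ∈ LinearMap.range (1 - ν) := by
  obtain ⟨y, rfl⟩ := ha
  refine ⟨⁅h, y⁆, ?_⟩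
  simp only [LinearMap.sub_apply, Module.End.one_apply, hbr, hh, lie_sub]

theorem lie_mem_range_one_sub_sup_bracketSpan (hbr : ∀ x y : L, ν ⁅x, y⁆ = ⁅ν x, ν y⁆)
    (hdecomp : LinearMap.ker (1 - ν) ⊔ LinearMap.range (1 - ν) = ⊤) (x : L) {a : L}
    (ha : a ∈ LinearMap.range (1 - ν)) :
    ⁅x, a⁆ ∈ LinearMap.range (1 - ν) ⊔ (LinearMap.range (1 - ν)).bracketSpan := by
  obtain ⟨h, hh, n, hn, rfl⟩ := Submodule.mem_sup.1 (hdecomp ▸ Submodule.mem_top (x := x))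
  rw [add_lie]
  have hh : ν h = h := (sub_eq_zero.1 (LinearMap.mem_ker.1 hh)).symm
  exact add_mem (Submodule.mem_sup_left (lie_mem_range_one_sub_of_apply_eq_self hbr hh ha))
    (Submodule.mem_sup_right (Submodule.lie_mem_bracketSpan hn ha))

end FixedPoints

theorem statement4_general {L : Type*} [LieRing L] [LieAlgebra ℝ L]
    [LieAlgebra.IsSimple ℝ L]
    (ν : Module.End ℝ L) (hbr : ∀ x y : L, ν ⁅x, y⁆ = ⁅ν x, ν y⁆)
    (k : ℕ) (hk : 2 ≤ k) (hν : ν ^ k = 1) (hne : ν ≠ 1) :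
    (∃ C : LieIdeal ℝ L,
        (C : Submodule ℝ L) =
          LinearMap.range (1 - ν) ⊔
            Submodule.span ℝ
              {z : L | ∃ a ∈ LinearMap.range (1 - ν), ∃ b ∈ LinearMap.range (1 - ν), ⁅a, b⁆ = z}) ∧
    (LinearMap.range (1 - ν) ⊔
        Submodule.span ℝ
          {z : L | ∃ a ∈ LinearMap.range (1 - ν), ∃ b ∈ LinearMap.range (1 - ν), ⁅a, b⁆ = z}
        ≠ ⊥) ∧
    (LinearMap.range (1 - ν) ⊔
        Submodule.span ℝ
          {z : L | ∃ a ∈ LinearMap.range (1 - ν), ∃ b ∈ LinearMap.range (1 - ν), ⁅a, b⁆ = z}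
        = ⊤) ∧
    (∀ I : LieIdeal ℝ L, (I : Set L) ⊆ (LinearMap.ker (1 - ν) : Submodule ℝ L) → I = ⊥) ∧
    (∀ x ∈ LinearMap.ker (1 - ν),
      ∃ y ∈ Submodule.span ℝ
          {z : L | ∃ a ∈ LinearMap.range (1 - ν), ∃ b ∈ LinearMap.range (1 - ν), ⁅a, b⁆ = z},
        y - x ∈ LinearMap.range (1 - ν)) := by
  have hdecomp := Module.End.ker_one_sub_sup_range_one_sub_eq_top_of_pow_eq_one
    (by positivity : (k : ℝ) ≠ 0) hν
  set m := LinearMap.range (1 - ν)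
  let C := m.supBracketSpanLieIdeal (lie_mem_range_one_sub_sup_bracketSpan hbr hdecomp)
  have hone_sub : 1 - ν ≠ 0 := sub_ne_zero.2 hne.symm
  have hC_ne : (C : Submodule ℝ L) ≠ ⊥ :=
    ne_bot_of_le_ne_bot (LinearMap.range_eq_bot.not.2 hone_sub) le_sup_left
  have hC_top : (C : Submodule ℝ L) = ⊤ :=
    (LieSubmodule.toSubmodule_eq_top C).2 <|
      (LieAlgebra.IsSimple.eq_bot_or_eq_top C).resolve_left (by simpa using hC_ne)
  refine ⟨⟨C, rfl⟩, hC_ne, hC_top, fun I hI => ?_, fun x _ => ?_⟩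
  · refine (LieAlgebra.IsSimple.eq_bot_or_eq_top I).resolve_right fun hI_top => hone_sub ?_
    exact LinearMap.ker_eq_top.1 (eq_top_iff.2 fun x _ => hI (by simp [hI_top]))
  · obtain ⟨a, ha, z, hz, rfl⟩ := Submodule.mem_sup.1 (hC_top ▸ Submodule.mem_top (x := x))
    exact ⟨z, hz, by simpa using neg_mem ha⟩

/-- Let `g` be a finite-dimensional simple real Lie algebra and `ν` an
automorphism of order dividing `k ≥ 2`, `ν ≠ id`; set `h := ker (id - ν)`,
`m := range (id - ν)` and let `bs` be the span of all brackets of elements of `m`.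
Then `c := m ⊔ bs` is (the underlying submodule of) a nonzero Lie ideal of `g`, hence
`c = g`; consequently the pair `(g, ν)` is prime: every Lie ideal contained in `h` is
zero, and the projection of `bs` onto `h` along `m` is all of `h`. -/
theorem statement4 {L : Type*} [LieRing L] [LieAlgebra ℝ L] [FiniteDimensional ℝ L]
    [LieAlgebra.IsSimple ℝ L]
    (ν : Module.End ℝ L) (hbr : ∀ x y : L, ν ⁅x, y⁆ = ⁅ν x, ν y⁆)
    (k : ℕ) (hk : 2 ≤ k) (hν : ν ^ k = 1) (hne : ν ≠ 1) :
    (∃ C : LieIdeal ℝ L,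
        (C : Submodule ℝ L) =
          LinearMap.range (1 - ν) ⊔
            Submodule.span ℝ
              {z : L | ∃ a ∈ LinearMap.range (1 - ν), ∃ b ∈ LinearMap.range (1 - ν), ⁅a, b⁆ = z}) ∧
    (LinearMap.range (1 - ν) ⊔
        Submodule.span ℝ
          {z : L | ∃ a ∈ LinearMap.range (1 - ν), ∃ b ∈ LinearMap.range (1 - ν), ⁅a, b⁆ = z}
        ≠ ⊥) ∧
    (LinearMap.range (1 - ν) ⊔
        Submodule.span ℝ
          {z : L | ∃ a ∈ LinearMap.range (1 - ν), ∃ b ∈ LinearMap.range (1 - ν), ⁅a, b⁆ = z}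
        = ⊤) ∧
    (∀ I : LieIdeal ℝ L, (I : Set L) ⊆ (LinearMap.ker (1 - ν) : Submodule ℝ L) → I = ⊥) ∧
    (∀ x ∈ LinearMap.ker (1 - ν),
      ∃ y ∈ Submodule.span ℝ
          {z : L | ∃ a ∈ LinearMap.range (1 - ν), ∃ b ∈ LinearMap.range (1 - ν), ⁅a, b⁆ = z},
        y - x ∈ LinearMap.range (1 - ν)) :=
  statement4_general ν hbr k hk hν hne
end

section
/- Let g be a finite-dimensional real Lie algebra with Killing form B, let ν : g → g be a Lie algebra automorphism with ν^k = id for some integer k ≥ 2, set h := ker(id − ν) and m := range(id − ν), and let σ : g → g be an involutive Lie algebra automorphism commuting with ν (hence σ preserves h and m). Let J : m → m be a linear map with J ∘ J = −id, which is ad_h-equivariant (J(⁅t, X⁆) = ⁅t, J X⁆ for all t ∈ h, X ∈ m) and commutes with σ on m (J(σ X) = σ(J X) for X ∈ m). Let Z ∈ h with ⁅Z, W⁆ = 0 for all W ∈ h, write Z = h′ + h″ with σ(h′) = h′, σ(h″) = −h″, and assume the bilinear form (X, Y) ↦ B(Z, ⁅J X, Y⁆) on m is symmetric and positive definite. Then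 either h′ = 0, or ad(h′) restricted to m has trivial kernel (for X ∈ m, ⁅h′, X⁆ = 0 implies X = 0). -/
/-- `g` real Lie algebra with Killing form `B`, `ν` automorphism of
order dividing `k ≥ 2`, `h := ker (id - ν)`, `m := range (id - ν)`, `σ` involutive
automorphism commuting with `ν`.  Let `J` be a linear map preserving `m` with
`J ∘ J = -id` on `m`, `ad h`-equivariant on `m` and commuting with `σ` on `m`.  Let
`Z ∈ h` be central in `h`, decomposed as `Z = h′ + h″` into `σ`-eigenvectors, and assume
the form `(X, Y) ↦ B(Z, ⁅J X, Y⁆)` is symmetric and positive definite on `m`.  Then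
either `h′ = 0` or `ad h′` has trivial kernel on `m`. -/
theorem statement14 {L : Type*} [LieRing L] [LieAlgebra ℝ L] [FiniteDimensional ℝ L]
    (ν : Module.End ℝ L) (hbr : ∀ x y : L, ν ⁅x, y⁆ = ⁅ν x, ν y⁆)
    (k : ℕ) (hk : 2 ≤ k) (hν : ν ^ k = 1)
    (σ : Module.End ℝ L) (hσbr : ∀ x y : L, σ ⁅x, y⁆ = ⁅σ x, σ y⁆)
    (hσinv : σ ^ 2 = 1) (hcomm : σ * ν = ν * σ)
    (J : Module.End ℝ L)
    (hJm : ∀ X ∈ LinearMap.range (1 - ν), J X ∈ LinearMap.range (1 - ν))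
    (hJJ : ∀ X ∈ LinearMap.range (1 - ν), J (J X) = -X)
    (hJad : ∀ t ∈ LinearMap.ker (1 - ν), ∀ X ∈ LinearMap.range (1 - ν),
        J ⁅t, X⁆ = ⁅t, J X⁆)
    (hJσ : ∀ X ∈ LinearMap.range (1 - ν), J (σ X) = σ (J X))
    (Z h' h'' : L) (hZh : Z ∈ LinearMap.ker (1 - ν))
    (hZc : ∀ W ∈ LinearMap.ker (1 - ν), ⁅Z, W⁆ = 0)
    (hdec : Z = h' + h'') (hσh' : σ h' = h') (hσh'' : σ h'' = -h'')
    (hsymm : ∀ X ∈ LinearMap.range (1 - ν), ∀ Y ∈ LinearMap.range (1 - ν),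
        killingForm ℝ L Z ⁅J X, Y⁆ = killingForm ℝ L Z ⁅J Y, X⁆)
    (hpos : ∀ X ∈ LinearMap.range (1 - ν), X ≠ 0 → 0 < killingForm ℝ L Z ⁅J X, X⁆) :
    h' = 0 ∨ (∀ X ∈ LinearMap.range (1 - ν), ⁅h', X⁆ = 0 → X = 0) := by
  right
  intro X hX hbrX
  by_contra hX0
  -- pointwise facts about σ
  have hσσ : ∀ x : L, σ (σ x) = x := by
    intro x
    have := congrArg (fun f : Module.End ℝ L => f x) hσinv
    simpa [pow_two] using this
  have hσν : ∀ x : L, σ (ν x) = ν (σ x) := by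
    intro x
    have := congrArg (fun f : Module.End ℝ L => f x) hcomm
    simpa using this
  have hσinj : Function.Injective σ := by
    intro a b hab
    have := congrArg σ hab
    simpa [hσσ] using this
  -- σ preserves ker and range of (1 - ν)
  have hσker : ∀ x ∈ LinearMap.ker (1 - ν), σ x ∈ LinearMap.ker (1 - ν) := by
    intro x hx
    have hx2 : ν x = x := by
      have h0 : x - ν x = 0 := by
        simpa [LinearMap.sub_apply] using LinearMap.mem_ker.mp hx
      exact (sub_eq_zero.mp h0).symm
    exact LinearMap.mem_ker.mpr (by simp [LinearMap.sub_apply, ← hσν, hx2])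
  have hσrange : ∀ x ∈ LinearMap.range (1 - ν), σ x ∈ LinearMap.range (1 - ν) := by
    intro x hx
    rcases hx with ⟨y, rfl⟩
    exact ⟨σ y, by simp [LinearMap.sub_apply, hσν]⟩
  -- h' ∈ ker (1 - ν)
  have hZσ : σ Z = h' - h'' := by rw [hdec]; simp [hσh', hσh'', sub_eq_add_neg]
  have hh' : h' ∈ LinearMap.ker (1 - ν) := by
    have h1 : Z + σ Z = (2 : ℝ) • h' := by
      rw [hZσ, hdec]; module
    have h2 : (Z + σ Z) ∈ LinearMap.ker (1 - ν) :=
      Submodule.add_mem _ hZh (hσker Z hZh)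
    have h3 : h' = (2 : ℝ)⁻¹ • (Z + σ Z) := by rw [h1]; module
    rw [h3]; exact Submodule.smul_mem _ _ h2
  -- B(h', ⁅J X, X⁆) = 0
  have hJX0 : ⁅h', J X⁆ = 0 := by
    have := hJad h' hh' X hX
    rw [hbrX] at this
    simpa using this.symm
  have hBh' : killingForm ℝ L h' ⁅J X, X⁆ = 0 := by
    rw [← LieModule.traceForm_apply_lie_apply, hJX0]
    simp
  -- Killing form invariance under σ
  have hadσ : ∀ a : L, LieAlgebra.ad ℝ L (σ a) = σ * LieAlgebra.ad ℝ L a * σ := by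
    intro a
    ext x
    simp only [LieAlgebra.ad_apply, Module.End.mul_apply]
    rw [hσbr, hσσ]
  have hKσ : ∀ a b : L, killingForm ℝ L (σ a) (σ b) = killingForm ℝ L a b := by
    intro a b
    rw [killingForm_apply_apply, killingForm_apply_apply, hadσ, hadσ]
    have hσσ' : σ * σ = 1 := by simpa [pow_two] using hσinv
    set A := LieAlgebra.ad ℝ L a
    set B := LieAlgebra.ad ℝ L b
    rw [← Module.End.mul_eq_comp, ← Module.End.mul_eq_comp]
    have e1 : σ * (σ * B * σ) = B * σ := by
      rw [mul_assoc σ B σ, ← mul_assoc σ σ (B * σ), hσσ', one_mul]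
    have e2 : (σ * A * σ) * (σ * B * σ) = σ * (A * B) * σ := by
      calc (σ * A * σ) * (σ * B * σ) = σ * A * (σ * (σ * B * σ)) := by rw [mul_assoc]
        _ = σ * A * (B * σ) := by rw [e1]
        _ = σ * (A * B) * σ := by rw [← mul_assoc, mul_assoc σ A B]
    rw [e2]
    calc LinearMap.trace ℝ L (σ * (A * B) * σ)
        = LinearMap.trace ℝ L (σ * (σ * (A * B))) := LinearMap.trace_mul_comm ℝ _ _
      _ = LinearMap.trace ℝ L (A * B) := by rw [← mul_assoc, hσσ', one_mul]
  -- B(σ Z, ⁅J X, X⁆) = g(σ X, σ X)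
  have hσX : σ X ∈ LinearMap.range (1 - ν) := hσrange X hX
  have hσX0 : σ X ≠ 0 := fun h => hX0 (hσinj (by simpa using h))
  have key : killingForm ℝ L (σ Z) ⁅J X, X⁆ = killingForm ℝ L Z ⁅J (σ X), σ X⁆ := by
    rw [hJσ X hX, ← hσbr]
    rw [← hKσ Z (σ ⁅J X, X⁆), hσσ]
  have hpos1 : 0 < killingForm ℝ L Z ⁅J X, X⁆ := hpos X hX hX0
  have hpos2 : 0 < killingForm ℝ L Z ⁅J (σ X), σ X⁆ := hpos (σ X) hσX hσX0
  have hsum : killingForm ℝ L Z ⁅J X, X⁆ + killingForm ℝ L (σ Z) ⁅J X, X⁆ = 0 := by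
    rw [hZσ, hdec]
    simp only [map_add, map_sub, LinearMap.add_apply, LinearMap.sub_apply]
    linarith [hBh']
  rw [key] at hsum
  linarith
end
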